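/- In the setting of the separation lemma, if additionally at least one of χ₁, χ₂ is nonconstant, then the pair (λ, τ) with χ₁ + λχ₂ ≡ τ is unique, and G₂(T) = λ G₁(T) and R(T) = τ Tr G₁(T) for all T. -/

import Mathlib

/-!
If `P` is an orthogonal projection onto a line `ℝu`, then `χ (ω P) = χ ω • P + χ 0 • (1 - P)`.
Subtracting the identity at `Ω = 0` from the one at `Ω = ω P` leaves
`uᵀ ((χ₁ ω - χ₁ 0) G₁ + (χ₂ ω - χ₂ 0) G₂) u = 0` for every `u`, and since this matrix is
symmetric it vanishes. Its trace at `T₀` gives `χ₁ + λ χ₂ ≡ τ` with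
`λ = Tr G₂(T₀) / Tr G₁(T₀)`. Such a relation makes `χ₂` nonconstant as soon as `χ₁` or `χ₂`
is, and a point where `χ₂` differs from `χ₂ 0` determines `λ`, forces `G₂ = λ G₁`, and turns the
identity at `Ω = 0` into `R = τ Tr G₁`.
-/

open Matrix

section

variable {𝕜 A : Type*} {q : A → Prop} [RCLike 𝕜] [Ring A] [StarRing A] [TopologicalSpace A]
  [T2Space A] [Algebra 𝕜 A] [ContinuousFunctionalCalculus 𝕜 A q]

theorem cfc_smul_of_isIdempotentElem {p : A} (hp : IsIdempotentElem p) (hqp : q p)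
    (f : 𝕜 → 𝕜) (ω : 𝕜) : cfc f (ω • p) = f ω • p + f 0 • (1 - p) := by
  have hlin : (spectrum 𝕜 p).EqOn (fun x ↦ f (ω • x)) (fun x ↦ (f ω - f 0) * x + f 0) := by
    intro x hx
    rcases hp.spectrum_subset 𝕜 hx with rfl | rfl <;> simp
  rw [← cfc_comp_smul ω f p (((hp.finite_spectrum 𝕜).image _).continuousOn _), cfc_congr hlin,
    cfc_add_const _ _ p, cfc_const_mul_id _ p, Algebra.algebraMap_eq_smul_one]
  module

end

namespace Matrix

variable {m : Type*} [Fintype m]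

-- For `u = 0` this is `0`, since `0⁻¹ = 0`.
noncomputable def rankOneProj (u : m → ℝ) : Matrix m m ℝ := (u ⬝ᵥ u)⁻¹ • vecMulVec u u

theorem isIdempotentElem_rankOneProj (u : m → ℝ) : IsIdempotentElem (rankOneProj u) := by
  by_cases hu : u ⬝ᵥ u = 0
  · simp [IsIdempotentElem, rankOneProj, hu]
  · simp only [IsIdempotentElem, rankOneProj, smul_mul_smul_comm, vecMulVec_mul_vecMulVec,
      vecMulVec_smul, smul_smul]
    field_simp

theorem posSemidef_rankOneProj (u : m → ℝ) : (rankOneProj u).PosSemidef := by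
  have := posSemidef_vecMulVec_self_star u
  rw [star_trivial] at this
  exact this.smul (inv_nonneg.mpr (dotProduct_self_star_nonneg u))

theorem trace_mul_rankOneProj (G : Matrix m m ℝ) (u : m → ℝ) :
    (G * rankOneProj u).trace = (u ⬝ᵥ u)⁻¹ * (u ⬝ᵥ G *ᵥ u) := by
  rw [rankOneProj, Matrix.mul_smul, mul_vecMulVec, trace_smul, trace_vecMulVec,
    dotProduct_comm (G *ᵥ u), smul_eq_mul]

variable [DecidableEq m]

theorem IsHermitian.eq_zero_of_forall_dotProduct_mulVec_self {𝕜 : Type*} [RCLike 𝕜]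
    {M : Matrix m m 𝕜} (hM : M.IsHermitian) (h : ∀ u, star u ⬝ᵥ M *ᵥ u = 0) : M = 0 := by
  have hsymm := isSymmetric_toEuclideanLin_iff.mpr hM
  refine toEuclideanLin.map_eq_zero_iff.mp (hsymm.inner_map_self_eq_zero.mp fun x ↦ ?_)
  rw [hsymm, EuclideanSpace.inner_eq_star_dotProduct, dotProduct_comm]
  exact h x.ofLp

theorem IsHermitian.eq_zero_of_forall_trace_mul_rankOneProj {M : Matrix m m ℝ}
    (hM : M.IsHermitian) (h : ∀ u, (M * rankOneProj u).trace = 0) : M = 0 := by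
  refine hM.eq_zero_of_forall_dotProduct_mulVec_self fun u ↦ ?_
  have hu := h u
  rw [trace_mul_rankOneProj, mul_eq_zero, inv_eq_zero] at hu
  rcases hu with hu | hu
  · simp [dotProduct_self_eq_zero.mp hu]
  · simpa using hu

theorem trace_mul_cfc_smul_rankOneProj (G : Matrix m m ℝ) (χ : ℝ → ℝ) (u : m → ℝ) (ω : ℝ) :
    (G * cfc χ (ω • rankOneProj u)).trace
      = (χ ω - χ 0) * (G * rankOneProj u).trace + χ 0 * G.trace := by
  rw [cfc_smul_of_isIdempotentElem (isIdempotentElem_rankOneProj u)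
    (posSemidef_rankOneProj u).isHermitian.isSelfAdjoint, mul_add, Matrix.mul_smul,
    Matrix.mul_smul, mul_sub, mul_one, trace_add, trace_smul, trace_smul, trace_sub, smul_eq_mul,
    smul_eq_mul]
  ring

theorem sub_smul_add_sub_smul_eq_zero_of_trace_mul_cfc_eq {G₁ G₂ : Matrix m m ℝ}
    (hG₁ : G₁.IsHermitian) (hG₂ : G₂.IsHermitian) {χ₁ χ₂ : ℝ → ℝ} {r : ℝ}
    (h : ∀ Ω : Matrix m m ℝ, Ω.PosSemidef → (G₁ * cfc χ₁ Ω).trace + (G₂ * cfc χ₂ Ω).trace = r)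
    {ω : ℝ} (hω : 0 ≤ ω) : (χ₁ ω - χ₁ 0) • G₁ + (χ₂ ω - χ₂ 0) • G₂ = 0 := by
  have hM : ((χ₁ ω - χ₁ 0) • G₁ + (χ₂ ω - χ₂ 0) • G₂).IsHermitian :=
    (hG₁.smul (.all _)).add (hG₂.smul (.all _))
  refine hM.eq_zero_of_forall_trace_mul_rankOneProj fun u ↦ ?_
  have hωP := h _ ((posSemidef_rankOneProj u).smul hω)
  -- `Ω = 0` written as `0 • P`, so that the same trace formula applies
  have h₀ := h _ ((posSemidef_rankOneProj u).smul (le_refl (0 : ℝ)))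
  simp only [trace_mul_cfc_smul_rankOneProj] at hωP h₀
  rw [add_mul, trace_add, smul_mul_assoc, smul_mul_assoc, trace_smul, trace_smul, smul_eq_mul,
    smul_eq_mul]
  linarith

end Matrix

section

variable {f g : ℝ → ℝ}

theorem affine_relation_of_sub_mul_add_sub_mul_eq_zero {a b : ℝ} (ha : a ≠ 0)
    (h : ∀ ω, 0 ≤ ω → (f ω - f 0) * a + (g ω - g 0) * b = 0) :
    ∀ ω, 0 ≤ ω → f ω + b / a * g ω = f 0 + b / a * g 0 := by
  intro ω hω
  have := h ω hω
  field_simp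
  linear_combination this

theorem exists_apply_ne_apply_zero_of_affine_relation {l τ : ℝ}
    (hrel : ∀ ω, 0 ≤ ω → f ω + l * g ω = τ)
    (hnonconst : (∃ ω₁ ω₂ : ℝ, 0 ≤ ω₁ ∧ 0 ≤ ω₂ ∧ f ω₁ ≠ f ω₂)
      ∨ (∃ ω₁ ω₂ : ℝ, 0 ≤ ω₁ ∧ 0 ≤ ω₂ ∧ g ω₁ ≠ g ω₂)) :
    ∃ ω, 0 ≤ ω ∧ g ω ≠ g 0 := by
  by_contra! hg
  rcases hnonconst with ⟨ω₁, ω₂, h₁, h₂, hne⟩ | ⟨ω₁, ω₂, h₁, h₂, hne⟩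
  · have e₁ := hrel ω₁ h₁
    have e₂ := hrel ω₂ h₂
    rw [hg ω₁ h₁] at e₁
    rw [hg ω₂ h₂] at e₂
    exact hne (by linarith)
  · exact hne ((hg ω₁ h₁).trans (hg ω₂ h₂).symm)

theorem affine_relation_coeff_eq {l τ ω : ℝ} (hrel : ∀ ω, 0 ≤ ω → f ω + l * g ω = τ)
    (hω : 0 ≤ ω) (hg : g ω ≠ g 0) : l = (f 0 - f ω) / (g ω - g 0) := by
  rw [eq_div_iff (sub_ne_zero.mpr hg)]
  linear_combination hrel ω hω - hrel 0 le_rfl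

theorem eq_smul_of_affine_relation {M : Type*} [AddCommGroup M] [Module ℝ M] {x y : M}
    {l τ ω : ℝ} (hrel : ∀ ω, 0 ≤ ω → f ω + l * g ω = τ) (hω : 0 ≤ ω) (hg : g ω ≠ g 0)
    (h : (f ω - f 0) • x + (g ω - g 0) • y = 0) : y = l • x := by
  have hf : f ω - f 0 = -(l * (g ω - g 0)) := by linear_combination hrel ω hω - hrel 0 le_rfl
  have hscaled : (g ω - g 0) • (y - l • x) = 0 := by
    rw [← h, hf]
    module
  exact sub_eq_zero.mp ((smul_eq_zero.mp hscaled).resolve_left (sub_ne_zero.mpr hg))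

end

theorem matrix_separation_of_variables_unique_general {n : ℕ} (χ₁ χ₂ : ℝ → ℝ)
    (G₁ G₂ : ℝ → Matrix (Fin n) (Fin n) ℝ)
    (hG₁ : ∀ T, (G₁ T).IsHermitian) (hG₂ : ∀ T, (G₂ T).IsHermitian)
    (T₀ : ℝ) (hT₀ : (G₁ T₀).trace ≠ 0)
    (R : ℝ → ℝ)
    (hmain : ∀ T : ℝ, ∀ Ω : Matrix (Fin n) (Fin n) ℝ, Ω.PosSemidef →
      (G₁ T * cfc χ₁ Ω).trace + (G₂ T * cfc χ₂ Ω).trace = R T)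
    (hnonconst : (∃ ω₁ ω₂ : ℝ, 0 ≤ ω₁ ∧ 0 ≤ ω₂ ∧ χ₁ ω₁ ≠ χ₁ ω₂)
      ∨ (∃ ω₁ ω₂ : ℝ, 0 ≤ ω₁ ∧ 0 ≤ ω₂ ∧ χ₂ ω₁ ≠ χ₂ ω₂)) :
    (∃! p : ℝ × ℝ, ∀ ω : ℝ, 0 ≤ ω → χ₁ ω + p.1 * χ₂ ω = p.2)
      ∧ ∀ l τ : ℝ, (∀ ω : ℝ, 0 ≤ ω → χ₁ ω + l * χ₂ ω = τ) →
          (∀ T, G₂ T = l • G₁ T) ∧ (∀ T, R T = τ * (G₁ T).trace) := by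
  have hinc (T ω : ℝ) (hω : 0 ≤ ω) : (χ₁ ω - χ₁ 0) • G₁ T + (χ₂ ω - χ₂ 0) • G₂ T = 0 :=
    sub_smul_add_sub_smul_eq_zero_of_trace_mul_cfc_eq (hG₁ T) (hG₂ T) (hmain T) hω
  have hR (T : ℝ) : χ₁ 0 * (G₁ T).trace + χ₂ 0 * (G₂ T).trace = R T := by
    simpa [Algebra.algebraMap_eq_smul_one, mul_comm] using hmain T 0 .zero
  set l₀ := (G₂ T₀).trace / (G₁ T₀).trace
  have hrel₀ : ∀ ω, 0 ≤ ω → χ₁ ω + l₀ * χ₂ ω = χ₁ 0 + l₀ * χ₂ 0 :=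
    affine_relation_of_sub_mul_add_sub_mul_eq_zero hT₀ fun ω hω ↦ by
      simpa [mul_comm] using congrArg trace (hinc T₀ ω hω)
  obtain ⟨ω, hω, hne⟩ := exists_apply_ne_apply_zero_of_affine_relation hrel₀ hnonconst
  refine ⟨⟨(l₀, _), hrel₀, fun p hp ↦ ?_⟩, fun l τ hrel ↦ ⟨fun T ↦ ?_, fun T ↦ ?_⟩⟩
  · have hl : p.1 = l₀ :=
      (affine_relation_coeff_eq hp hω hne).trans (affine_relation_coeff_eq hrel₀ hω hne).symm
    exact Prod.ext hl (by rw [← hp 0 le_rfl, hl])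
  · exact eq_smul_of_affine_relation hrel hω hne (hinc T ω hω)
  · rw [← hR T, eq_smul_of_affine_relation hrel hω hne (hinc T ω hω), trace_smul, smul_eq_mul,
      ← hrel 0 le_rfl]
    ring

/-- In the setting of the separation lemma, if moreover at least one of `χ₁, χ₂` is
nonconstant on `ℝ₊`, then the pair `(λ, τ)` with `χ₁ + λχ₂ ≡ τ` on `ℝ₊` is unique,
and `G₂ ≡ λ G₁`, `R ≡ τ Tr G₁`. -/
theorem matrix_separation_of_variables_unique {n : ℕ} (χ₁ χ₂ : ℝ → ℝ)
    (hχ₁ : Continuous χ₁) (hχ₂ : Continuous χ₂)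
    (G₁ G₂ : ℝ → Matrix (Fin n) (Fin n) ℝ)
    (hG₁ : ∀ T, (G₁ T).IsHermitian) (hG₂ : ∀ T, (G₂ T).IsHermitian)
    (T₀ : ℝ) (hT₀ : (G₁ T₀).trace ≠ 0)
    (R : ℝ → ℝ)
    (hmain : ∀ T : ℝ, ∀ Ω : Matrix (Fin n) (Fin n) ℝ, Ω.PosSemidef →
      (G₁ T * cfc χ₁ Ω).trace + (G₂ T * cfc χ₂ Ω).trace = R T)
    (hnonconst : (∃ ω₁ ω₂ : ℝ, 0 ≤ ω₁ ∧ 0 ≤ ω₂ ∧ χ₁ ω₁ ≠ χ₁ ω₂)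
      ∨ (∃ ω₁ ω₂ : ℝ, 0 ≤ ω₁ ∧ 0 ≤ ω₂ ∧ χ₂ ω₁ ≠ χ₂ ω₂)) :
    (∃! p : ℝ × ℝ, ∀ ω : ℝ, 0 ≤ ω → χ₁ ω + p.1 * χ₂ ω = p.2)
      ∧ ∀ l τ : ℝ, (∀ ω : ℝ, 0 ≤ ω → χ₁ ω + l * χ₂ ω = τ) →
          (∀ T, G₂ T = l • G₁ T) ∧ (∀ T, R T = τ * (G₁ T).trace) :=
  matrix_separation_of_variables_unique_general χ₁ χ₂ G₁ G₂ hG₁ hG₂ T₀ hT₀ R hmain hnonconst
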